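/- For every positive integer n, the point distribution G_{I^n} is closed: if l ∈ ℤ \ {0} and there exist x, y ∈ G_{I^n} with x = l y, then l·G_{I^n} ⊆ G_{I^n}. Moreover an integer l satisfies l·G_{I^n} ⊆ G_{I^n} if and only if gcd(l, n) = 1. -/

import Mathlib

open Filter Real Topology

/-- A point `p` of a point distribution `G ⊆ ℤ²` is *visible* if no point `q ∈ G`
satisfies `q = λ • p` (in `ℝ²`) with `0 < |λ| < 1`. -/
def VisiblePt (G : Set (ℤ × ℤ)) (p : ℤ × ℤ) : Prop :=
  p ∈ G ∧ ¬∃ q ∈ G, ∃ r : ℝ, 0 < |r| ∧ |r| < 1 ∧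
    ((q.1 : ℝ), (q.2 : ℝ)) = (r * p.1, r * p.2)

/-- `N(S,T)`: number of points of `S ⊆ ℤ² ⊆ ℝ²` in the closed disc of radius `T`
around the origin. -/
noncomputable def countIn (S : Set (ℤ × ℤ)) (T : ℝ) : ℕ :=
  Nat.card {v : ℤ × ℤ // v ∈ S ∧ (v.1 : ℝ) ^ 2 + (v.2 : ℝ) ^ 2 ≤ T ^ 2}

/-- The point distribution `G_{I^n} = ⋃_{k ∈ I^n} ((nℤ + k) × nℤ)` where
`I^n = {k ∈ {1,…,n−1} : gcd(k,n) = 1}`. -/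
def GIn (n : ℕ) : Set (ℤ × ℤ) :=
  {v | ∃ k : ℕ, 1 ≤ k ∧ k < n ∧ Nat.gcd k n = 1 ∧
    (n : ℤ) ∣ (v.1 - k) ∧ (n : ℤ) ∣ v.2}

/-! A point lies in `G_{I^n}` exactly when its first coordinate is a unit mod `n` and its
second is divisible by `n` (and `n > 1`, since `I^1` is empty). Both conditions are stable under
multiplication by `l` coprime to `n`, and `(l, 0) ∈ G_{I^n}` forces `l` to be coprime to `n`;
so a single relation `x = l • y` inside `G_{I^n}` already makes `l` coprime to `n`. -/

theorem mem_GIn_iff {n : ℕ} {z : ℤ × ℤ} :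
    z ∈ GIn n ↔ 1 < n ∧ IsCoprime z.1 n ∧ (n : ℤ) ∣ z.2 := by
  constructor
  · rintro ⟨k, hk1, hkn, hkgcd, ⟨t, ht⟩, hz2⟩
    have hk : IsCoprime (k : ℤ) n := Int.isCoprime_iff_gcd_eq_one.mpr hkgcd
    refine ⟨by omega, ?_, hz2⟩
    rw [show z.1 = k + n * t by linarith]
    exact hk.add_mul_left_left t
  · rintro ⟨hn, hz1, hz2⟩
    have hn0 : (0 : ℤ) < n := by omega
    have hr0 : 0 ≤ z.1 % n := Int.emod_nonneg _ hn0.ne'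
    have hrn : z.1 % n < n := Int.emod_lt_of_pos _ hn0
    have hr : (((z.1 % n).toNat : ℕ) : ℤ) = z.1 % n := Int.toNat_of_nonneg hr0
    have hgcd : Int.gcd (z.1 % n) n = 1 := by
      rw [Int.gcd_emod]; exact Int.isCoprime_iff_gcd_eq_one.mp hz1
    refine ⟨(z.1 % n).toNat, ?_, by omega, ?_, ?_, hz2⟩
    · by_contra! h0
      rw [show z.1 % n = 0 by omega, Int.gcd_zero_left] at hgcd
      omega
    · rwa [← Int.gcd_natCast_natCast, hr]
    · rw [hr]; exact Int.dvd_self_sub_emod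

theorem smul_mem_GIn {n : ℕ} {l : ℤ} (hl : IsCoprime l n) {z : ℤ × ℤ} (hz : z ∈ GIn n) :
    l • z ∈ GIn n := by
  obtain ⟨hn, hz1, hz2⟩ := mem_GIn_iff.mp hz
  exact mem_GIn_iff.mpr ⟨hn, hl.mul_left hz1, hz2.mul_left l⟩

theorem isCoprime_of_smul_mem_GIn {n : ℕ} {l : ℤ} {y : ℤ × ℤ} (hy : l • y ∈ GIn n) :
    IsCoprime l n :=
  (mem_GIn_iff.mp hy).2.1.of_mul_left_left

/-- `G_{I^n}` is closed: if some nonzero integer `l` satisfies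
`x = l • y` for points `x, y ∈ G_{I^n}`, then `l • G_{I^n} ⊆ G_{I^n}`; moreover
`l • G_{I^n} ⊆ G_{I^n}` holds if and only if `gcd(l, n) = 1`. -/
theorem GIn_closed (n : ℕ) (hn : 0 < n) :
    (∀ l : ℤ, l ≠ 0 → (∃ x ∈ GIn n, ∃ y ∈ GIn n, x = l • y) →
      ∀ z ∈ GIn n, l • z ∈ GIn n) ∧
    (∀ l : ℤ, (∀ z ∈ GIn n, l • z ∈ GIn n) ↔ Int.gcd l n = 1) := by
  refine ⟨?_, fun l ↦ ⟨fun h ↦ ?_, fun h _ ↦ smul_mem_GIn (Int.isCoprime_iff_gcd_eq_one.mpr h)⟩⟩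
  · rintro l - ⟨x, hx, y, -, rfl⟩ z
    exact smul_mem_GIn (isCoprime_of_smul_mem_GIn hx)
  · obtain rfl | hn1 := Nat.succ_le_of_lt hn |>.eq_or_lt
    · exact Int.gcd_one_right l
    · have hbase : ((1, 0) : ℤ × ℤ) ∈ GIn n :=
        mem_GIn_iff.mpr ⟨hn1, isCoprime_one_left, dvd_zero _⟩
      exact Int.isCoprime_iff_gcd_eq_one.mp (isCoprime_of_smul_mem_GIn (h _ hbase))
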